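/- arXiv:2205.10446 — 2 statements merged into one kernel-verified Lean document; each statement's English description precedes it below -/
import Mathlib

section
/- Let Δ be a family of frank endofunctors of a category C, each fulfilling (P) at every pair of objects. Then for all objects a,b of C, the Ramsey degree rd(a,b) is at most the minimum over all finite compositions δ̄ = δ₁∘⋯∘δₙ (δᵢ∈Δ) of |δ̄(hom(a,b))|. -/
open CategoryTheory

universe v u

/-- A functor `δ` with domain `C` fulfills (P) at the pair `a, b`. -/
def FulfillsP {C : Type u} [Category.{v} C] (δ : C ⥤ C) (a b : C) : Prop :=
  ∀ r : ℕ, ∃ c : C, ∀ χ : (a ⟶ c) → Fin r, ∃ g : b ⟶ c,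
    ∀ f₁ f₂ : a ⟶ b, δ.map f₁ = δ.map f₂ → χ (f₁ ≫ g) = χ (f₂ ≫ g)

/-- An endofunctor `δ` of `C` is frank. -/
def Frank {C : Type u} [Category.{v} C] (δ : C ⥤ C) : Prop :=
  ∀ (a : C) (b' : C), ∃ b : C, δ.obj b = b' ∧
    ∀ g' : δ.obj a ⟶ δ.obj b, ∃ f : a ⟶ b, δ.map f = g'

/-- `RamseyDegLE a b k`: the Ramsey degree of the pair `a, b` is at most `k`. -/
def RamseyDegLE {C : Type u} [Category.{v} C] (a b : C) (k : ℕ∞) : Prop :=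
  ∀ r : ℕ, ∃ c : C, ∀ χ : (a ⟶ c) → Fin r, ∃ g : b ⟶ c,
    (Set.range fun f : a ⟶ b => χ (f ≫ g)).encard ≤ k

/-- The Ramsey degree of the pair `a, b`. -/
noncomputable def ramseyDeg {C : Type u} [Category.{v} C] (a b : C) : ℕ∞ :=
  sInf {k : ℕ∞ | RamseyDegLE a b k}

lemma fulfillsP_id {C : Type u} [Category.{v} C] (a b : C) : FulfillsP (𝟭 C) a b :=
  fun _r => ⟨b, fun χ => ⟨𝟙 b, fun f₁ f₂ h => by
    simp only [Functor.id_map] at h; rw [h]⟩⟩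

lemma fulfillsP_comp {C : Type u} [Category.{v} C] {δ ε : C ⥤ C}
    (hfrank : Frank δ) (hδ : ∀ a b : C, FulfillsP δ a b)
    (hε : ∀ a b : C, FulfillsP ε a b) (a b : C) : FulfillsP (δ ⋙ ε) a b := by
  classical
  intro r
  rcases Nat.eq_zero_or_pos r with hr | hr
  · subst hr
    exact ⟨b, fun χ => ⟨𝟙 b, fun f₁ f₂ _ => (χ (f₁ ≫ 𝟙 b)).elim0⟩⟩
  haveI : Nonempty (Fin r) := ⟨⟨0, hr⟩⟩
  obtain ⟨c', hc'⟩ := hε (δ.obj a) (δ.obj b) r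
  obtain ⟨c, hcobj, hcsurj⟩ := hfrank b c'
  subst hcobj
  obtain ⟨d, hd⟩ := hδ a c r
  refine ⟨d, fun χ => ?_⟩
  obtain ⟨g, hg⟩ := hd χ
  set χ' : (δ.obj a ⟶ δ.obj c) → Fin r :=
    fun q => if h : ∃ p : a ⟶ c, δ.map p = q then χ (h.choose ≫ g)
      else Classical.arbitrary _ with hχ'
  obtain ⟨g', hg'⟩ := hc' χ'
  obtain ⟨g'', hg''⟩ := hcsurj g'
  refine ⟨g'' ≫ g, fun f₁ f₂ hf => ?_⟩
  have key : ∀ f : a ⟶ b, χ (f ≫ g'' ≫ g) = χ' (δ.map f ≫ g') := by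
    intro f
    have hex : ∃ p : a ⟶ c, δ.map p = δ.map (f ≫ g'') := ⟨f ≫ g'', rfl⟩
    have h1 : χ' (δ.map f ≫ g') = χ (hex.choose ≫ g) := by
      rw [← hg'', ← δ.map_comp, hχ']
      exact dif_pos hex
    rw [h1, ← Category.assoc]
    exact (hg (f ≫ g'') hex.choose hex.choose_spec.symm)
  rw [key f₁, key f₂]
  exact hg' (δ.map f₁) (δ.map f₂) hf

lemma fulfillsP_foldr {C : Type u} [Category.{v} C] (Δ : Set (C ⥤ C))
    (hfrank : ∀ δ ∈ Δ, Frank δ) (hP : ∀ δ ∈ Δ, ∀ a b : C, FulfillsP δ a b) :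
    ∀ L : List (C ⥤ C), (∀ δ ∈ L, δ ∈ Δ) →
      ∀ a b : C, FulfillsP (L.foldr (· ⋙ ·) (𝟭 C)) a b := by
  intro L
  induction L with
  | nil => intro _ a b; exact fulfillsP_id a b
  | cons δ L ih =>
    intro hmem a b
    have hδΔ : δ ∈ Δ := hmem δ (by simp)
    exact fulfillsP_comp (hfrank δ hδΔ) (hP δ hδΔ)
      (ih (fun e he => hmem e (by simp [he]))) a b

/-- If every member of `Δ` is a frank endofunctor fulfilling (P) at every pair of objects,
then for all `a, b`, `rd(a,b)` is at most `|δ̄(hom(a,b))|` for every finite composition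
`δ̄ = δ₁ ∘ ⋯ ∘ δₙ` of members of `Δ`; i.e. `rd(a,b)` is at most the minimum of these values. -/
theorem ramseyDeg_le_of_family {C : Type u} [Category.{v} C] (Δ : Set (C ⥤ C))
    (hfrank : ∀ δ ∈ Δ, Frank δ)
    (hP : ∀ δ ∈ Δ, ∀ a b : C, FulfillsP δ a b)
    (a b : C) (L : List (C ⥤ C)) (hL : L ≠ []) (hLΔ : ∀ δ ∈ L, δ ∈ Δ) :
    ramseyDeg a b ≤
      (Set.range fun f : a ⟶ b => (L.foldr (· ⋙ ·) (𝟭 C)).map f).encard := by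
  classical
  set δbar := L.foldr (· ⋙ ·) (𝟭 C) with hδbar
  have hPbar : FulfillsP δbar a b := fulfillsP_foldr Δ hfrank hP L hLΔ a b
  apply sInf_le
  intro r
  obtain ⟨c, hc⟩ := hPbar r
  refine ⟨c, fun χ => ?_⟩
  obtain ⟨g, hg⟩ := hc χ
  refine ⟨g, ?_⟩
  rcases (Set.range fun f : a ⟶ b => χ (f ≫ g)).eq_empty_or_nonempty with h | ⟨v₀, f₀, hf₀⟩
  · simp [h]
  set F : Fin r → (δbar.obj a ⟶ δbar.obj b) :=
    fun v => if h : ∃ f : a ⟶ b, χ (f ≫ g) = v then δbar.map h.choose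
      else δbar.map f₀ with hF
  apply Set.encard_le_encard_of_injOn (f := F)
  · rintro _ ⟨f, rfl⟩
    have hex : ∃ f' : a ⟶ b, χ (f' ≫ g) = χ (f ≫ g) := ⟨f, rfl⟩
    rw [hF]
    simp only [dif_pos hex]
    exact ⟨hex.choose, rfl⟩
  · rintro _ ⟨f₁, rfl⟩ _ ⟨f₂, rfl⟩ hFe
    have hex₁ : ∃ f' : a ⟶ b, χ (f' ≫ g) = χ (f₁ ≫ g) := ⟨f₁, rfl⟩
    have hex₂ : ∃ f' : a ⟶ b, χ (f' ≫ g) = χ (f₂ ≫ g) := ⟨f₂, rfl⟩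
    rw [hF] at hFe
    simp only [dif_pos hex₁, dif_pos hex₂] at hFe
    show χ (f₁ ≫ g) = χ (f₂ ≫ g)
    rw [← hex₁.choose_spec, ← hex₂.choose_spec]
    exact hg hex₁.choose hex₂.choose hFe
end

section
/- The functor ∂_R: R → R is frank: for all objects m of R and n'=∂_R(n) of R, there exists an object n with ∂_R(n)=n' and ∂_R(hom(m,n))=hom(∂_R m, ∂_R n). -/
/-- Morphisms of the category `R` from `m` to `n`: subsets `x ⊆ [n] = {1,…,n}` with `|x| = m`
(the pair `(x,n)` is recorded by the type depending on `n`). -/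
def RHom (m n : ℕ) : Type := {x : Finset ℕ // x ⊆ Finset.Icc 1 n ∧ x.card = m}

/-- The increasing enumeration of a finset `y` of size `l`, as a function `[l] → y`,
extended by `0` off `[l] = {1,…,l}`. -/
noncomputable def Renum (y : Finset ℕ) {l : ℕ} (h : y.card = l) (j : ℕ) : ℕ :=
  if hj : j - 1 < l then (y.orderIsoOfFin h ⟨j - 1, hj⟩ : ℕ) else 0

/-- Composition in `R`: `(y,n) · (x,m) = (f_y(x), n)` where `f_y : [m] → y` is the unique
increasing bijection. -/
noncomputable def Rcomp {k l m : ℕ} (x : RHom k l) (y : RHom l m) : RHom k m :=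
  ⟨x.1.image (Renum y.1 y.2.2), by
    constructor
    · intro z hz
      simp only [Finset.mem_image] at hz
      obtain ⟨j, hj, rfl⟩ := hz
      have hjl : j ∈ Finset.Icc 1 l := x.2.1 hj
      rw [Finset.mem_Icc] at hjl
      have hlt : j - 1 < l := by omega
      unfold Renum
      rw [dif_pos hlt]
      exact y.2.1 (y.1.orderIsoOfFin y.2.2 ⟨j - 1, hlt⟩).2
    · rw [Finset.card_image_of_injOn, x.2.2]
      intro j₁ h₁ j₂ h₂ he
      have hj₁ := x.2.1 h₁
      have hj₂ := x.2.1 h₂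
      rw [Finset.mem_Icc] at hj₁ hj₂
      have l₁ : j₁ - 1 < l := by omega
      have l₂ : j₂ - 1 < l := by omega
      unfold Renum at he
      rw [dif_pos l₁, dif_pos l₂] at he
      have hfin : (⟨j₁ - 1, l₁⟩ : Fin l) = ⟨j₂ - 1, l₂⟩ :=
        (y.1.orderIsoOfFin y.2.2).injective (Subtype.ext he)
      have hv : j₁ - 1 = j₂ - 1 := congrArg Fin.val hfin
      omega⟩

/-- The functor `∂_R` on objects: `n ↦ max(n−1, 0)` (truncated subtraction). -/
def RdelObj (n : ℕ) : ℕ := n - 1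

/-- The functor `∂_R` on morphisms: `(x,n) ↦ (x ∖ {max x}, max(n−1,0))`
(and `(∅,n) ↦ (∅, max(n−1,0))`). -/
def Rdel {m n : ℕ} (x : RHom m n) : RHom (RdelObj m) (RdelObj n) :=
  ⟨x.1.erase (WithBot.unbotD 0 x.1.max), by
    constructor
    · intro z hz
      have hz' := Finset.mem_of_mem_erase hz
      have hne := Finset.ne_of_mem_erase hz
      have hnonempty : x.1.Nonempty := ⟨z, hz'⟩
      have hmax : WithBot.unbotD 0 x.1.max = x.1.max' hnonempty := by
        rw [← Finset.coe_max' hnonempty]; rfl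
      have hle : z ≤ x.1.max' hnonempty := Finset.le_max' _ z hz'
      have hlt : z < x.1.max' hnonempty := lt_of_le_of_ne hle (by rw [← hmax]; exact hne)
      have hmem := x.2.1 (x.1.max'_mem hnonempty)
      rw [Finset.mem_Icc] at hmem
      have hzmem := x.2.1 hz'
      rw [Finset.mem_Icc] at hzmem
      rw [Finset.mem_Icc]
      unfold RdelObj
      omega
    · rcases x.1.eq_empty_or_nonempty with he | hne
      · have hm : m = 0 := by rw [← x.2.2, he]; rfl
        rw [he]
        simp [hm, RdelObj]
      · have hmax : WithBot.unbotD 0 x.1.max = x.1.max' hne := by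
          rw [← Finset.coe_max' hne]; rfl
        rw [hmax, Finset.card_erase_of_mem (x.1.max'_mem hne), x.2.2]
        rfl⟩

/-! Take `n = n' + 1`. A morphism `y' ⊆ [n']` of size `m - 1` lifts to `y' ∪ {n' + 1} ⊆ [n' + 1]`,
whose maximum is the new element `n' + 1`, so `∂_R` removes exactly that element again.
For `m = 0` both hom-sets consist of `∅` alone. -/

theorem Finset.erase_unbotD_max_insert {α : Type*} [LinearOrder α] {s : Finset α} {a : α} (d : α)
    (h : ∀ b ∈ s, b < a) : (insert a s).erase (WithBot.unbotD d (insert a s).max) = s := by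
  rw [Finset.max_insert, max_eq_left (Finset.max_le fun b hb => WithBot.coe_le_coe.mpr (h b hb).le),
    WithBot.unbotD_coe, Finset.erase_insert fun ha => (h a ha).false]

namespace RHom

theorem eq_of_zero {n : ℕ} (x y : RHom 0 n) : x = y :=
  Subtype.ext <| (Finset.card_eq_zero.mp x.2.2).trans (Finset.card_eq_zero.mp y.2.2).symm

def empty (n : ℕ) : RHom 0 n := ⟨∅, Finset.empty_subset _, rfl⟩

theorem lt_succ_of_mem {k n : ℕ} (y : RHom k n) {b : ℕ} (hb : b ∈ y.1) : b < n + 1 :=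
  Nat.lt_succ_of_le (Finset.mem_Icc.mp (y.2.1 hb)).2

def insertTop {k n : ℕ} (y : RHom k n) : RHom (k + 1) (n + 1) :=
  ⟨insert (n + 1) y.1,
    Finset.insert_subset (by simp) (y.2.1.trans (Finset.Icc_subset_Icc_right n.le_succ)),
    by rw [Finset.card_insert_of_notMem fun h => (y.lt_succ_of_mem h).false, y.2.2]⟩

theorem Rdel_insertTop {k n : ℕ} (y : RHom k n) : Rdel y.insertTop = y :=
  Subtype.ext <| Finset.erase_unbotD_max_insert 0 fun _ => y.lt_succ_of_mem

end RHom

/-- The functor `∂_R : R → R` is frank: for all objects `m` and `n'` (an object in the image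
of `∂_R` on objects), there exists an object `n` with `∂_R n = n'` and
`∂_R(hom(m,n)) = hom(∂_R m, ∂_R n)`. -/
theorem Rdel_frank (m n' : ℕ) :
    ∃ n : ℕ, RdelObj n = n' ∧
      ∀ y' : RHom (RdelObj m) (RdelObj n), ∃ y : RHom m n, Rdel y = y' := by
  refine ⟨n' + 1, rfl, ?_⟩
  cases m with
  | zero => exact fun y' => ⟨RHom.empty _, RHom.eq_of_zero _ y'⟩
  | succ k => exact fun y' => ⟨y'.insertTop, y'.Rdel_insertTop⟩
end
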